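/- arXiv:1902.04556 — 2 statements merged into one kernel-verified Lean document; each statement's English description precedes it below -/
import Mathlib

section
/- Fix positive integers M and K, a user index k in {1,...,K}, positive reals rho and tau, and positive large-scale fading coefficients beta_{m,k'} > 0 for m = 1,...,M and k' = 1,...,K. Define gamma_{m,k'} = rho*tau*beta_{m,k'}^2/(1 + rho*tau*beta_{m,k'}). Let eta_1, ..., eta_K be power control coefficients in [0,1] with eta_k > 0, and define SINR_k = rho * (sum_{m=1}^M gamma_{m,k})^2 * eta_k / ( sum_{m=1}^M gamma_{m,k} + rho * sum_{k'=1}^K eta_{k'} * sum_{m=1}^M gamma_{m,k} * beta_{m,k'} ). Then SINR_k < (sum_{m=1}^M gamma_{m,k})^2 / (sum_{m=1}^M gamma_{m,k}^2). -/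
/-!
Since `γ m k = β m k · ρτβ m k / (1 + ρτβ m k) < β m k`, we have `∑ m, γ m k ^ 2 ≤ ∑ m, γ m k * β m k`,
so the self-interference term `k' = k` of the denominator alone already exceeds `ρ η k ∑ m, γ m k ^ 2`;
the noise term `∑ m, γ m k > 0` makes the bound strict.
-/

open Finset

lemma mul_sq_div_one_add_mul_le_self {c b : ℝ} (hc : 0 ≤ c) (hb : 0 ≤ b) :
    c * b ^ 2 / (1 + c * b) ≤ b := by
  rw [div_le_iff₀ (by positivity)]
  nlinarith [mul_nonneg hc hb]

section SINR

variable {ι κ : Type*} [Fintype ι] [Fintype κ]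

lemma sum_sq_le_sum_mul_of_le {γ β : ι → ℝ} (hγ : ∀ m, 0 ≤ γ m) (hγβ : ∀ m, γ m ≤ β m) :
    ∑ m, γ m ^ 2 ≤ ∑ m, γ m * β m :=
  sum_le_sum fun m _ => by rw [sq]; exact mul_le_mul_of_nonneg_left (hγβ m) (hγ m)

lemma mul_sum_sq_le_interference {γ : ι → ℝ} {β : ι → κ → ℝ} {η : κ → ℝ} (k : κ)
    (hγ : ∀ m, 0 ≤ γ m) (hγβ : ∀ m, γ m ≤ β m k) (hβ : ∀ m k', 0 ≤ β m k')
    (hη : ∀ k', 0 ≤ η k') :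
    η k * ∑ m, γ m ^ 2 ≤ ∑ k', η k' * ∑ m, γ m * β m k' :=
  calc η k * ∑ m, γ m ^ 2 ≤ η k * ∑ m, γ m * β m k :=
        mul_le_mul_of_nonneg_left (sum_sq_le_sum_mul_of_le hγ hγβ) (hη k)
    _ ≤ ∑ k', η k' * ∑ m, γ m * β m k' :=
        single_le_sum (f := fun k' => η k' * ∑ m, γ m * β m k')
          (fun k' _ => mul_nonneg (hη k') (sum_nonneg fun m _ => mul_nonneg (hγ m) (hβ m k')))
          (mem_univ k)

lemma sinr_lt_sq_sum_div_sum_sq [Nonempty ι] {ρ : ℝ} {γ : ι → ℝ} {β : ι → κ → ℝ}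
    {η : κ → ℝ} (k : κ) (hρ : 0 ≤ ρ) (hγ : ∀ m, 0 < γ m) (hγβ : ∀ m, γ m ≤ β m k)
    (hβ : ∀ m k', 0 ≤ β m k') (hη : ∀ k', 0 ≤ η k') :
    ρ * (∑ m, γ m) ^ 2 * η k / (∑ m, γ m + ρ * ∑ k', η k' * ∑ m, γ m * β m k') <
      (∑ m, γ m) ^ 2 / ∑ m, γ m ^ 2 := by
  have hS : 0 < ∑ m, γ m := sum_pos (fun m _ => hγ m) univ_nonempty
  have hQ : 0 < ∑ m, γ m ^ 2 := sum_pos (fun m _ => pow_pos (hγ m) 2) univ_nonempty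
  have hI := mul_le_mul_of_nonneg_left
    (mul_sum_sq_le_interference k (fun m => (hγ m).le) hγβ hβ hη) hρ
  have hηQ : 0 ≤ ρ * (η k * ∑ m, γ m ^ 2) := by have := hη k; positivity
  rw [div_lt_div_iff₀ (by linarith) hQ]
  nlinarith [pow_pos hS 2]

end SINR

theorem stmt_5_general (M K : ℕ) (hM : 0 < M) (k : Fin K)
    (ρ τ : ℝ) (hρ : 0 < ρ) (hτ : 0 < τ)
    (β : Fin M → Fin K → ℝ) (hβ : ∀ m k', 0 < β m k')
    (γ : Fin M → Fin K → ℝ)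
    (hγ : ∀ m k', γ m k' = ρ * τ * (β m k') ^ 2 / (1 + ρ * τ * β m k'))
    (η : Fin K → ℝ) (hη : ∀ k', η k' ∈ Set.Icc (0 : ℝ) 1) :
    ρ * (∑ m, γ m k) ^ 2 * η k /
      (∑ m, γ m k + ρ * ∑ k', η k' * ∑ m, γ m k * β m k') <
    (∑ m, γ m k) ^ 2 / ∑ m, (γ m k) ^ 2 := by
  have : Nonempty (Fin M) := ⟨⟨0, hM⟩⟩
  refine sinr_lt_sq_sum_div_sum_sq k hρ.le (fun m => ?_) (fun m => ?_)
    (fun m k' => (hβ m k').le) (fun k' => (hη k').1)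
  · rw [hγ]
    have := hβ m k
    positivity
  · rw [hγ]
    exact mul_sq_div_one_add_mul_le_self (mul_pos hρ hτ).le (hβ m k).le

/-- In cell-free Massive MIMO with maximum-ratio decoding, the uplink
effective SINR of user `k` under any power control `η ∈ [0,1]^K` with `η k > 0` is
strictly upper bounded by `(∑ m, γ m k)² / (∑ m, (γ m k)²)`, where
`γ m k' = ρτ (β m k')² / (1 + ρτ β m k')`. -/
theorem stmt_5 (M K : ℕ) (hM : 0 < M) (hK : 0 < K) (k : Fin K)
    (ρ τ : ℝ) (hρ : 0 < ρ) (hτ : 0 < τ)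
    (β : Fin M → Fin K → ℝ) (hβ : ∀ m k', 0 < β m k')
    (γ : Fin M → Fin K → ℝ)
    (hγ : ∀ m k', γ m k' = ρ * τ * (β m k') ^ 2 / (1 + ρ * τ * β m k'))
    (η : Fin K → ℝ) (hη : ∀ k', η k' ∈ Set.Icc (0 : ℝ) 1) (hηk : 0 < η k) :
    ρ * (∑ m, γ m k) ^ 2 * η k /
      (∑ m, γ m k + ρ * ∑ k', η k' * ∑ m, γ m k * β m k') <
    (∑ m, γ m k) ^ 2 / ∑ m, (γ m k) ^ 2 :=
  stmt_5_general M K hM k ρ τ hρ hτ β hβ γ hγ η hη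
end

section
/- Fix positive integers M and K, positive reals rho and tau, and positive large-scale fading coefficients beta_1, ..., beta_K > 0; define gamma_k = rho*tau*beta_k^2/(1 + rho*tau*beta_k) and eta_k = (min over k' of gamma_{k'}) / gamma_k. Then eta in [0,1]^K, at least one eta_k equals 1, and for any other power control eta' in [0,1]^K, the minimum over k of the single-cell maximum-ratio SINRs M*rho*gamma_k*eta'_k / (1 + rho * sum_{k'} beta_{k'} * eta'_{k'}) is at most the common value M*rho / ( 1/(min over k' of gamma_{k'}) + rho * sum_{k'=1}^K beta_{k'}/gamma_{k'} ) achieved by eta. -/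
/-!
For any power control `η' ∈ [0,1]^K` let `m = min_k γ_k η'_k`. Since `η' ≤ 1`,
`m ≤ min_k γ_k`, and since `η'_k ≥ m / γ_k` the interference term satisfies `∑ β_k η'_k ≥ m ∑ β_k / γ_k`. Together these give
`m (1 / min γ + ρ ∑ β_k / γ_k) ≤ 1 + ρ ∑ β_k η'_k`, which is the claimed bound on the
minimal SINR `M ρ m / (1 + ρ ∑ β_k η'_k)`. The control `η_k = min γ / γ_k` equalizes all the
products `γ_k η_k` and attains it.
-/

namespace Finset

variable {ι : Type*} {s : Finset ι} (hs : s.Nonempty) {γ β η : ι → ℝ}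

theorem inf'_div_mem_Icc (hγ : ∀ i ∈ s, 0 < γ i) {i : ι} (hi : i ∈ s) :
    s.inf' hs γ / γ i ∈ Set.Icc (0 : ℝ) 1 := by
  obtain ⟨j, hj, hγj⟩ := s.exists_mem_eq_inf' hs γ
  refine ⟨div_nonneg (hγj ▸ (hγ j hj).le) (hγ i hi).le, ?_⟩
  rw [div_le_one (hγ i hi)]
  exact inf'_le γ hi

theorem exists_inf'_div_eq_one (hγ : ∀ i ∈ s, 0 < γ i) :
    ∃ i ∈ s, s.inf' hs γ / γ i = 1 := by
  obtain ⟨i, hi, hγi⟩ := s.exists_mem_eq_inf' hs γ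
  exact ⟨i, hi, by rw [hγi, div_self (hγ i hi).ne']⟩

theorem inf'_mul_le_inf'_of_le_one (hγ : ∀ i ∈ s, 0 ≤ γ i) (hη : ∀ i ∈ s, η i ≤ 1) :
    s.inf' hs (fun i => γ i * η i) ≤ s.inf' hs γ :=
  inf'_mono_fun fun i hi => mul_le_of_le_one_right (hγ i hi) (hη i hi)

theorem inf'_mul_mul_sum_div_le (hγ : ∀ i ∈ s, 0 < γ i) (hβ : ∀ i ∈ s, 0 ≤ β i) :
    s.inf' hs (fun i => γ i * η i) * ∑ i ∈ s, β i / γ i ≤ ∑ i ∈ s, β i * η i := by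
  rw [mul_sum]
  refine sum_le_sum fun i hi => ?_
  rw [mul_div_assoc', div_le_iff₀ (hγ i hi)]
  have := mul_le_mul_of_nonneg_left (inf'_le (fun i => γ i * η i) hi) (hβ i hi)
  linarith

theorem inf'_mul_mul_le_one_add (hγ : ∀ i ∈ s, 0 < γ i) (hβ : ∀ i ∈ s, 0 ≤ β i)
    (hη : ∀ i ∈ s, η i ≤ 1) {ρ : ℝ} (hρ : 0 ≤ ρ) :
    s.inf' hs (fun i => γ i * η i) * (1 / s.inf' hs γ + ρ * ∑ i ∈ s, β i / γ i) ≤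
      1 + ρ * ∑ i ∈ s, β i * η i := by
  obtain ⟨j, hj, hγj⟩ := s.exists_mem_eq_inf' hs γ
  have hg : 0 < s.inf' hs γ := hγj ▸ hγ j hj
  rw [mul_add, mul_left_comm]
  gcongr
  · rw [mul_one_div, div_le_one hg]
    exact inf'_mul_le_inf'_of_le_one hs (fun i hi => (hγ i hi).le) hη
  · exact inf'_mul_mul_sum_div_le hs hγ hβ

end Finset

theorem inf'_sinr_le_maxMin {ι : Type*} {s : Finset ι} (hs : s.Nonempty) {γ β η : ι → ℝ}
    (hγ : ∀ i ∈ s, 0 < γ i) (hβ : ∀ i ∈ s, 0 ≤ β i) (hη : ∀ i ∈ s, η i ∈ Set.Icc (0 : ℝ) 1)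
    {c ρ : ℝ} (hc : 0 ≤ c) (hρ : 0 ≤ ρ) :
    s.inf' hs (fun i => c * γ i * η i / (1 + ρ * ∑ j ∈ s, β j * η j)) ≤
      c / (1 / s.inf' hs γ + ρ * ∑ j ∈ s, β j / γ j) := by
  obtain ⟨i, hi, hγηi⟩ := s.exists_mem_eq_inf' hs fun i => γ i * η i
  obtain ⟨j, hj, hγj⟩ := s.exists_mem_eq_inf' hs γ
  have hg : 0 < s.inf' hs γ := hγj ▸ hγ j hj
  have hinterference : 0 ≤ ∑ j ∈ s, β j * η j :=
    Finset.sum_nonneg fun k hk => mul_nonneg (hβ k hk) (hη k hk).1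
  have hT : 0 ≤ ∑ j ∈ s, β j / γ j :=
    Finset.sum_nonneg fun k hk => div_nonneg (hβ k hk) (hγ k hk).le
  have hbound := Finset.inf'_mul_mul_le_one_add hs hγ hβ (fun i hi => (hη i hi).2) hρ
  rw [hγηi] at hbound
  refine (Finset.inf'_le _ hi).trans ?_
  rw [div_le_div_iff₀ (by positivity) (by positivity), mul_assoc c, mul_assoc c]
  exact mul_le_mul_of_nonneg_left hbound hc

theorem stmt_14_general (M K : ℕ) (hK : 0 < K)
    (ρ τ : ℝ) (hρ : 0 < ρ) (hτ : 0 < τ)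
    (β : Fin K → ℝ) (hβ : ∀ k, 0 < β k)
    (γ : Fin K → ℝ) (hγ : ∀ k, γ k = ρ * τ * (β k) ^ 2 / (1 + ρ * τ * β k))
    (η : Fin K → ℝ)
    (hη : ∀ k, η k = (Finset.univ.inf' ⟨⟨0, hK⟩, Finset.mem_univ _⟩ γ) / γ k) :
    (∀ k, η k ∈ Set.Icc (0 : ℝ) 1) ∧
    (∃ k, η k = 1) ∧
    (∀ η' : Fin K → ℝ, (∀ k, η' k ∈ Set.Icc (0 : ℝ) 1) →
      Finset.univ.inf' ⟨⟨0, hK⟩, Finset.mem_univ _⟩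
          (fun k => (M : ℝ) * ρ * γ k * η' k / (1 + ρ * ∑ k', β k' * η' k')) ≤
        (M : ℝ) * ρ / (1 / (Finset.univ.inf' ⟨⟨0, hK⟩, Finset.mem_univ _⟩ γ)
          + ρ * ∑ k', β k' / γ k')) := by
  have hγpos : ∀ k ∈ Finset.univ, 0 < γ k := fun k _ => by
    have := hβ k
    rw [hγ k]
    positivity
  obtain ⟨k, -, hk⟩ := Finset.exists_inf'_div_eq_one _ hγpos
  refine ⟨fun k => hη k ▸ Finset.inf'_div_mem_Icc _ hγpos (Finset.mem_univ k),
    ⟨k, (hη k).trans hk⟩, fun η' hη' =>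
      inf'_sinr_le_maxMin _ hγpos (fun k _ => (hβ k).le) (fun k _ => hη' k) (by positivity) hρ.le⟩

/-- In single-cell Massive MIMO with maximum-ratio decoding, the
power control `η k = (min_{k'} γ_{k'}) / γ k` lies in `[0,1]^K`, at least one of
its entries equals 1, and it maximizes the minimum SINR: for any other power
control `η' ∈ [0,1]^K`, the minimum over users of the SINRs
`M ρ γ_k η'_k / (1 + ρ ∑ β_{k'} η'_{k'})` is at most the common value
`M ρ / (1 / min_{k'} γ_{k'} + ρ ∑ β_{k'} / γ_{k'})` achieved by `η`. -/
theorem stmt_14 (M K : ℕ) (hM : 0 < M) (hK : 0 < K)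
    (ρ τ : ℝ) (hρ : 0 < ρ) (hτ : 0 < τ)
    (β : Fin K → ℝ) (hβ : ∀ k, 0 < β k)
    (γ : Fin K → ℝ) (hγ : ∀ k, γ k = ρ * τ * (β k) ^ 2 / (1 + ρ * τ * β k))
    (η : Fin K → ℝ)
    (hη : ∀ k, η k = (Finset.univ.inf' ⟨⟨0, hK⟩, Finset.mem_univ _⟩ γ) / γ k) :
    (∀ k, η k ∈ Set.Icc (0 : ℝ) 1) ∧
    (∃ k, η k = 1) ∧
    (∀ η' : Fin K → ℝ, (∀ k, η' k ∈ Set.Icc (0 : ℝ) 1) →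
      Finset.univ.inf' ⟨⟨0, hK⟩, Finset.mem_univ _⟩
          (fun k => (M : ℝ) * ρ * γ k * η' k / (1 + ρ * ∑ k', β k' * η' k')) ≤
        (M : ℝ) * ρ / (1 / (Finset.univ.inf' ⟨⟨0, hK⟩, Finset.mem_univ _⟩ γ)
          + ρ * ∑ k', β k' / γ k')) :=
  stmt_14_general M K hK ρ τ hρ hτ β hβ γ hγ η hη
end
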